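/- Let J be a strongly stable monomial ideal in A[x₀,…,xₙ] over a commutative noetherian ring A, F_J a J-marked set, and I = (F_J). The following are equivalent: (a) F_J is a J-marked basis, i.e., A[x] = I ⊕ ⟨N(J)⟩ as A-modules; (b) for every degree s, I_s = ⟨F_J^{(s)}⟩; (c) for every degree s, ⟨SF_J^{(s)}⟩ ⊆ ⟨F_J^{(s)}⟩; (d) I ∩ ⟨N(J)⟩ = 0. -/

import Mathlib

open MvPolynomial

noncomputable section

/-- Exponent vectors of monomials in the variables `x₀, …, xₙ`. -/
abbrev Mon (n : ℕ) : Type := Fin (n + 1) →₀ ℕ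

namespace MarkedFamilies

variable {n : ℕ}

/-- The total degree of a monomial given by its exponent vector. -/
def mdeg (α : Mon n) : ℕ := α.sum fun _ e => e

/-- A monomial ideal, identified with its (upward closed) set of monomials. -/
def IsMonomialIdeal (J : Set (Mon n)) : Prop := ∀ α ∈ J, ∀ δ : Mon n, α + δ ∈ J

/-- A strongly stable monomial ideal: a monomial ideal such that for every monomial
`x^α ∈ J`, every variable `x_j` dividing `x^α` and every `i > j`, `(x_i/x_j)·x^α ∈ J`. -/
def IsStronglyStable (J : Set (Mon n)) : Prop :=
  IsMonomialIdeal J ∧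
    ∀ α ∈ J, ∀ j : Fin (n + 1), α j ≠ 0 → ∀ i : Fin (n + 1), j < i →
      α - Finsupp.single j 1 + Finsupp.single i 1 ∈ J

/-- The minimal monomial generators `B_J` of a monomial ideal `J`. -/
def minGens (J : Set (Mon n)) : Set (Mon n) :=
  {α | α ∈ J ∧ ∀ j : Fin (n + 1), α j ≠ 0 → α - Finsupp.single j 1 ∉ J}

/-- `min x^γ ≥ max x^δ`: every variable dividing `x^γ` is at least every variable
dividing `x^δ` (vacuously true when either monomial is `1`). -/
def minGeMax (γ δ : Mon n) : Prop := ∀ i ∈ γ.support, ∀ j ∈ δ.support, j ≤ i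

/-- Lexicographic order induced by `x₀ < ⋯ < xₙ`: `a <ₗₑₓ b` iff at the largest
index where they differ, `a` has the smaller exponent. -/
def lexLt (a b : Mon n) : Prop :=
  ∃ i : Fin (n + 1), a i < b i ∧ ∀ j : Fin (n + 1), i < j → a j = b j

/-- A saturated strongly stable ideal: strongly stable and no minimal generator is
divisible by `x₀`. -/
def IsSaturatedSS (J : Set (Mon n)) : Prop :=
  IsStronglyStable J ∧ ∀ α ∈ minGens J, α 0 = 0

/-- The truncation `J_{≥ t}`: the (monomial) ideal generated by the monomials of `J`
of degree at least `t`. -/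
def truncSet (J : Set (Mon n)) (t : ℕ) : Set (Mon n) := {α | α ∈ J ∧ t ≤ mdeg α}

section Ring

variable (A : Type*) [CommRing A]

/-- `⟨N(J)⟩`: the `A`-span of the monomials not in `J`. -/
def nSpan (J : Set (Mon n)) : Submodule A (MvPolynomial (Fin (n + 1)) A) :=
  Submodule.span A {p | ∃ β : Mon n, β ∉ J ∧ p = monomial β (1 : A)}

/-- `⟨N(J)_s⟩`: the `A`-span of the monomials of degree `s` not in `J`. -/
def nSpanDeg (J : Set (Mon n)) (s : ℕ) : Submodule A (MvPolynomial (Fin (n + 1)) A) :=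
  Submodule.span A {p | ∃ β : Mon n, β ∉ J ∧ mdeg β = s ∧ p = monomial β (1 : A)}

/-- `I_s`: the degree-`s` homogeneous component of an ideal, as an `A`-submodule. -/
def idealDeg (I : Ideal (MvPolynomial (Fin (n + 1)) A)) (s : ℕ) :
    Submodule A (MvPolynomial (Fin (n + 1)) A) :=
  Submodule.restrictScalars A I ⊓ homogeneousSubmodule (Fin (n + 1)) A s

/-- `I_{≥ s}`: the ideal `⊕_{t ≥ s} I_t`, i.e. the ideal generated by the homogeneous
elements of `I` of degree at least `s`. -/
def idealGeq (I : Ideal (MvPolynomial (Fin (n + 1)) A)) (s : ℕ) :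
    Ideal (MvPolynomial (Fin (n + 1)) A) :=
  Ideal.span {f | f ∈ I ∧ ∃ t : ℕ, s ≤ t ∧ f.IsHomogeneous t}

/-- A homogeneous ideal of the polynomial ring. -/
def IsHomogIdeal (I : Ideal (MvPolynomial (Fin (n + 1)) A)) : Prop :=
  ∀ f ∈ I, ∀ s : ℕ, homogeneousComponent s f ∈ I

variable {A}

/-- A `J`-marked set: a family assigning to each minimal generator `x^α ∈ B_J` a
polynomial `f_α = x^α − Σ_{x^β ∈ N(J)_{|α|}} c_{αβ} x^β`. -/
def IsMarkedSet (J : Set (Mon n)) (F : Mon n → MvPolynomial (Fin (n + 1)) A) : Prop :=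
  ∀ α ∈ minGens J, (F α).coeff α = 1 ∧
    ∀ β ∈ (F α).support, β ≠ α → β ∉ J ∧ mdeg β = mdeg α

/-- The ideal generated by a marked set. -/
def markedIdeal (J : Set (Mon n)) (F : Mon n → MvPolynomial (Fin (n + 1)) A) :
    Ideal (MvPolynomial (Fin (n + 1)) A) :=
  Ideal.span (F '' minGens J)

/-- A `J`-marked basis: a `J`-marked set `F` with `A[x] = (F) ⊕ ⟨N(J)⟩` as `A`-modules. -/
def IsMarkedBasis (J : Set (Mon n)) (F : Mon n → MvPolynomial (Fin (n + 1)) A) : Prop :=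
  IsMarkedSet J F ∧
    IsCompl (Submodule.restrictScalars A (markedIdeal J F)) (nSpan A J)

/-- `F_J^{(s)} = { x^δ f_α : deg(x^δ f_α) = s, min x^α ≥ max x^δ }`. -/
def FSet (J : Set (Mon n)) (F : Mon n → MvPolynomial (Fin (n + 1)) A) (s : ℕ) :
    Set (MvPolynomial (Fin (n + 1)) A) :=
  {p | ∃ α δ : Mon n, α ∈ minGens J ∧ mdeg α + mdeg δ = s ∧ minGeMax α δ ∧
        p = monomial δ (1 : A) * F α}

/-- `F̂_J^{(s)} = { x^δ f_α : deg(x^δ f_α) = s, min x^α < max x^δ }`. -/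
def FHatSet (J : Set (Mon n)) (F : Mon n → MvPolynomial (Fin (n + 1)) A) (s : ℕ) :
    Set (MvPolynomial (Fin (n + 1)) A) :=
  {p | ∃ α δ : Mon n, α ∈ minGens J ∧ mdeg α + mdeg δ = s ∧ ¬ minGeMax α δ ∧
        p = monomial δ (1 : A) * F α}

/-- `SF_J^{(s)} = { x^δ f_β − x^γ f_α : x^δ f_β ∈ F̂_J^{(s)}, x^γ f_α ∈ F_J^{(s)},
x^δ x^β = x^γ x^α }`. -/
def SFSet (J : Set (Mon n)) (F : Mon n → MvPolynomial (Fin (n + 1)) A) (s : ℕ) :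
    Set (MvPolynomial (Fin (n + 1)) A) :=
  {p | ∃ α γ β δ : Mon n, α ∈ minGens J ∧ β ∈ minGens J ∧
      mdeg β + mdeg δ = s ∧ ¬ minGeMax β δ ∧
      mdeg α + mdeg γ = s ∧ minGeMax α γ ∧
      δ + β = γ + α ∧ p = monomial δ (1 : A) * F β - monomial γ (1 : A) * F α}

/-- A `(J_s)`-marked set: one marked polynomial `f̃_γ = x^γ − Σ_{x^δ ∈ N(J)_s} d_{γδ} x^δ`
for each monomial `x^γ` of degree `s` in `J`. -/
def IsTruncMarkedSet (J : Set (Mon n)) (s : ℕ)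
    (f : Mon n → MvPolynomial (Fin (n + 1)) A) : Prop :=
  ∀ γ : Mon n, γ ∈ J → mdeg γ = s →
    (f γ).coeff γ = 1 ∧ ∀ β ∈ (f γ).support, β ≠ γ → β ∉ J ∧ mdeg β = s

end Ring

/-- Index set for the generic coefficients `C_{αβ}` (`x^α ∈ B_J`, `x^β ∈ N(J)_{|α|}`). -/
abbrev CIdx (J : Set (Mon n)) : Type :=
  {p : Mon n × Mon n // p.1 ∈ minGens J ∧ p.2 ∉ J ∧ mdeg p.2 = mdeg p.1}

/-- The coefficient ring `ℤ[C]`. -/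
abbrev ZC (J : Set (Mon n)) : Type := MvPolynomial (CIdx J) ℤ

/-- The generic `J`-marked set `𝓕_J = { x^α − Σ_{x^β ∈ N(J)_{|α|}} C_{αβ} x^β }`
in `ℤ[C][x]`, characterized through its coefficients. -/
def IsGenericMarkedSet (J : Set (Mon n))
    (𝓕 : Mon n → MvPolynomial (Fin (n + 1)) (ZC J)) : Prop :=
  ∀ α : Mon n, ∀ hα : α ∈ minGens J,
    (𝓕 α).coeff α = 1 ∧
    (∀ γ : Mon n, ∀ hγ : γ ∉ J ∧ mdeg γ = mdeg α,
      (𝓕 α).coeff γ = - MvPolynomial.X ⟨(α, γ), hα, hγ.1, hγ.2⟩) ∧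
    (∀ γ : Mon n, γ ≠ α → ¬(γ ∉ J ∧ mdeg γ = mdeg α) → (𝓕 α).coeff γ = 0)

/-- The ideal `𝔦_J ⊆ ℤ[C]` generated by the `x`-coefficients of all polynomials
in `(𝓕_J) ∩ ⟨N(J)⟩`. -/
def markedCoeffIdeal (J : Set (Mon n))
    (𝓕 : Mon n → MvPolynomial (Fin (n + 1)) (ZC J)) : Ideal (ZC J) :=
  Ideal.span {c : ZC J | ∃ p : MvPolynomial (Fin (n + 1)) (ZC J),
    p ∈ markedIdeal J 𝓕 ∧ p ∈ nSpan (ZC J) J ∧ ∃ γ : Mon n, p.coeff γ = c}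

/-- The evaluation homomorphism `φ_{F_J} : ℤ[C] → A`, `C_{αβ} ↦ c_{αβ}`, associated to a
`J`-marked set `F` with `f_α = x^α − Σ c_{αβ} x^β` (so `c_{αβ} = −(F α).coeff β`). -/
noncomputable def evalHom (J : Set (Mon n)) {A : Type*} [CommRing A]
    (F : Mon n → MvPolynomial (Fin (n + 1)) A) : ZC J →+* A :=
  MvPolynomial.eval₂Hom (Int.castRingHom A) fun p => -((F p.val.1).coeff p.val.2)

/-- `x^γ` is the `σ`-leading monomial of `g` (with nonzero leading coefficient). -/
def IsLeadingMon {A : Type*} [CommRing A] (σlt : Mon n → Mon n → Prop)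
    (g : MvPolynomial (Fin (n + 1)) A) (γ : Mon n) : Prop :=
  g.coeff γ ≠ 0 ∧ ∀ δ ∈ g.support, δ ≠ γ → σlt δ γ

/-- `LC(I, x^γ)`: the set of leading coefficients at `x^γ` of elements of `I`,
together with `0`. -/
def LCset {A : Type*} [CommRing A] (σlt : Mon n → Mon n → Prop)
    (I : Ideal (MvPolynomial (Fin (n + 1)) A)) (γ : Mon n) : Set A :=
  {a | ∃ g ∈ I, IsLeadingMon σlt g γ ∧ g.coeff γ = a} ∪ {0}

/-- A monic ideal with respect to the term ordering `σ`. -/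
def IsMonicIdeal {A : Type*} [CommRing A] (σlt : Mon n → Mon n → Prop)
    (I : Ideal (MvPolynomial (Fin (n + 1)) A)) : Prop :=
  ∀ γ : Mon n, LCset σlt I γ = {0} ∨ LCset σlt I γ = Set.univ

/-- The set of `σ`-leading monomials of elements of `I` (i.e. `in_σ(I)`,
identified with its set of monomials). -/
def leadingMons {A : Type*} [CommRing A] (σlt : Mon n → Mon n → Prop)
    (I : Ideal (MvPolynomial (Fin (n + 1)) A)) : Set (Mon n) :=
  {γ | ∃ g ∈ I, IsLeadingMon σlt g γ}

end MarkedFamilies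
end

/-
Every monomial `x^ε ∈ J` factors uniquely as `x^δ · x^α` with `x^α ∈ B_J` and
`min x^α ≥ max x^δ` (existence by strong stability, uniqueness by minimality of `x^α`).
If `x^β ∈ N(J)` and `x^δ x^β ∈ J`, the factor `x^{δ'}` of `x^δ x^β` is lexicographically
smaller than `x^δ`. Writing `x^δ x^α = x^δ f_α + Σ c_{αβ} x^δ x^β` and inducting on `x^δ` in
this well-founded order gives `A[x]_s = ⟨F_J^{(s)}⟩ + ⟨N(J)_s⟩`; the coefficient of `x^δ x^α`
for the lex-largest `x^δ` occurring in a combination of `F_J^{(s)}` gives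
`⟨F_J^{(s)}⟩ ∩ ⟨N(J)⟩ = 0`. Since `I_s` is spanned by `F_J^{(s)} ∪ F̂_J^{(s)}` and every element
of `F̂_J^{(s)}` differs from one of `F_J^{(s)}` by an element of `SF_J^{(s)}`, each of the four
conditions amounts to `I_s = ⟨F_J^{(s)}⟩` for all `s`.
-/

open scoped Pointwise

namespace MarkedFamilies

variable {n : ℕ}

section Monomials

variable {J : Set (Mon n)}

lemma mdeg_add (a b : Mon n) : mdeg (a + b) = mdeg a + mdeg b :=
  map_add Finsupp.degree a b

lemma IsMonomialIdeal.mem_of_le (hJ : IsMonomialIdeal J) {a b : Mon n} (ha : a ∈ J)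
    (hab : a ≤ b) : b ∈ J := by
  simpa [add_tsub_cancel_of_le hab] using hJ a ha (b - a)

lemma lexLt_iff_toColex_lt {a b : Mon n} : lexLt a b ↔ toColex a < toColex b :=
  exists_congr fun _ => and_comm

lemma lexLt_wellFounded : WellFounded (lexLt (n := n)) :=
  Subrelation.wf lexLt_iff_toColex_lt.mp (InvImage.wf (toColex (α := Mon n)) wellFounded_lt)

lemma lexLt_trichotomous (a b : Mon n) : lexLt a b ∨ a = b ∨ lexLt b a := by
  simpa only [lexLt_iff_toColex_lt, toColex_inj] using lt_trichotomy (toColex a) (toColex b)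

lemma notMem_of_lt_of_mem_minGens (hJ : IsMonomialIdeal J) {α α' : Mon n}
    (hα : α ∈ minGens J) (hlt : α' < α) : α' ∉ J := by
  obtain ⟨i, hi⟩ := DFunLike.ne_iff.mp hlt.ne
  have hi : α' i < α i := lt_of_le_of_ne (hlt.le i) hi
  intro hα'
  refine hα.2 i (by omega) (hJ.mem_of_le hα' fun j => ?_)
  rcases eq_or_ne i j with rfl | hij
  · simp only [Finsupp.coe_tsub, Pi.sub_apply, Finsupp.single_eq_same]
    omega
  · simpa [Finsupp.single_apply, hij] using hlt.le j

lemma lt_of_add_eq_of_lexLt {α' γ' δ β : Mon n} (hge : minGeMax α' γ')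
    (heq : γ' + α' = δ + β) (hlt : lexLt δ γ') : α' < β := by
  obtain ⟨i, hi, htop⟩ := hlt
  have hco (j) : γ' j + α' j = δ j + β j := by simpa using DFunLike.congr_fun heq j
  have hbelow (j) (hj : j < i) : α' j = 0 := by
    by_contra h
    exact absurd (hge j (Finsupp.mem_support_iff.mpr h) i (Finsupp.mem_support_iff.mpr (by omega)))
      (not_le.mpr hj)
  have hle : α' ≤ β := fun j => by
    rcases lt_trichotomy j i with hj | rfl | hj
    · simp [hbelow j hj]
    · have := hco j; omega
    · have := hco j; have := htop j hj; omega
  exact lt_of_le_of_ne hle fun h => by have := hco i; rw [h] at this; omega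

lemma lexLt_of_add_eq (hJ : IsMonomialIdeal J) {α' γ' δ β : Mon n} (hβ : β ∉ J)
    (hα' : α' ∈ J) (hge : minGeMax α' γ') (heq : γ' + α' = δ + β) : lexLt γ' δ := by
  rcases lexLt_trichotomous γ' δ with h | rfl | h
  · exact h
  · exact absurd (add_left_cancel heq ▸ hα') hβ
  · exact absurd (hJ.mem_of_le hα' (lt_of_add_eq_of_lexLt hge heq h).le) hβ

lemma eq_of_add_eq_of_mem_minGens (hJ : IsMonomialIdeal J) {α δ α' δ' : Mon n}
    (hα : α ∈ minGens J) (hα' : α' ∈ minGens J) (hge : minGeMax α δ) (hge' : minGeMax α' δ')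
    (heq : δ' + α' = δ + α) : δ' = δ ∧ α' = α := by
  rcases lexLt_trichotomous δ δ' with h | rfl | h
  · exact absurd hα'.1 (notMem_of_lt_of_mem_minGens hJ hα (lt_of_add_eq_of_lexLt hge' heq h))
  · exact ⟨rfl, add_left_cancel heq⟩
  · exact absurd hα.1
      (notMem_of_lt_of_mem_minGens hJ hα' (lt_of_add_eq_of_lexLt hge heq.symm h))

lemma IsStronglyStable.sub_single_mem (hJ : IsStronglyStable J) {ε : Mon n} {i j : Fin (n + 1)}
    (hj : ε - Finsupp.single j 1 ∈ J) (hεj : ε j ≠ 0) (hεi : ε i ≠ 0) (hij : i ≤ j) :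
    ε - Finsupp.single i 1 ∈ J := by
  rcases hij.eq_or_lt with rfl | hij
  · exact hj
  · convert hJ.2 _ hj i (by simpa [Finsupp.single_apply, hij.ne'] using hεi) j hij using 1
    ext k
    simp only [Finsupp.coe_add, Finsupp.coe_tsub, Pi.add_apply, Pi.sub_apply, Finsupp.single_apply]
    split_ifs <;> subst_vars <;> omega

lemma IsStronglyStable.exists_add_eq (hJ : IsStronglyStable J) {ε : Mon n} (hε : ε ∈ J) :
    ∃ α δ, α ∈ minGens J ∧ minGeMax α δ ∧ δ + α = ε := by
  induction ε using WellFoundedLT.induction with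
  | _ ε ih =>
  by_cases hmin : ε ∈ minGens J
  · exact ⟨ε, 0, hmin, by simp [minGeMax], zero_add ε⟩
  obtain ⟨j, hεj, hj⟩ : ∃ j, ε j ≠ 0 ∧ ε - Finsupp.single j 1 ∈ J := by
    by_contra! h
    exact hmin ⟨hε, h⟩
  -- by strong stability `x^ε / x_m` with `m = min x^ε` still lies in `J`
  set m := ε.support.min' ⟨j, Finsupp.mem_support_iff.mpr hεj⟩
  have hεm : ε m ≠ 0 := Finsupp.mem_support_iff.mp (Finset.min'_mem _ _)
  have hm : ∀ i ∈ ε.support, m ≤ i := fun i hi => Finset.min'_le _ _ hi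
  have hle : Finsupp.single m 1 ≤ ε := Finsupp.single_le_iff.mpr (Nat.one_le_iff_ne_zero.mpr hεm)
  have hlt : ε - Finsupp.single m 1 < ε :=
    lt_of_le_of_ne tsub_le_self fun h => by
      have := DFunLike.congr_fun h m
      simp only [Finsupp.coe_tsub, Pi.sub_apply, Finsupp.single_eq_same] at this
      omega
  obtain ⟨α, δ, hα, hge, hsum⟩ := ih _ hlt
    (hJ.sub_single_mem hj hεj hεm (hm j (Finsupp.mem_support_iff.mpr hεj)))
  refine ⟨α, δ + Finsupp.single m 1, hα, fun i hi k hk => ?_, ?_⟩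
  · rcases Finset.mem_union.mp (Finsupp.support_add hk) with hk | hk
    · exact hge i hi k hk
    · rw [Finset.mem_singleton.mp (Finsupp.support_single_subset hk)]
      refine hm i (Finsupp.support_mono ?_ hi)
      exact (le_add_self.trans hsum.le).trans tsub_le_self
  · rw [add_right_comm, hsum, tsub_add_cancel_of_le hle]

end Monomials

section Polynomials

lemma mem_of_forall_monomial_mem {σ R : Type*} [CommSemiring R]
    {p : Submodule R (MvPolynomial σ R)} {f : MvPolynomial σ R}
    (h : ∀ ε ∈ f.support, monomial ε (1 : R) ∈ p) : f ∈ p := by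
  have hf : f ∈ restrictSupport R (f.support : Set (σ →₀ ℕ)) :=
    (mem_restrictSupport_iff R).mpr subset_rfl
  rw [restrictSupport_eq_span] at hf
  exact Submodule.span_le.mpr (Set.image_subset_iff.mpr h) hf

lemma monomial_mem_of_coeff_eq_one {σ R : Type*} [CommRing R]
    {p : Submodule R (MvPolynomial σ R)} {f : MvPolynomial σ R} {ε : σ →₀ ℕ} (hf : f ∈ p)
    (hε : f.coeff ε = 1) (hrest : ∀ ε' ∈ f.support, ε' ≠ ε → monomial ε' (1 : R) ∈ p) :
    monomial ε (1 : R) ∈ p := by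
  classical
  have hrem : f - monomial ε 1 ∈ p := mem_of_forall_monomial_mem fun ε' hε' => by
    have h := mem_support_iff.mp hε'
    rw [coeff_sub, coeff_monomial] at h
    by_cases hne : ε' = ε
    · subst hne
      simp [hε] at h
    · rw [if_neg (Ne.symm hne), sub_zero] at h
      exact hrest ε' (mem_support_iff.mpr h) hne
  simpa using sub_mem hf hrem

variable {A : Type*} [CommRing A] {J : Set (Mon n)} {F : Mon n → MvPolynomial (Fin (n + 1)) A}

lemma nSpan_eq_restrictSupport (J : Set (Mon n)) : nSpan A J = restrictSupport A Jᶜ := by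
  rw [restrictSupport_eq_span, nSpan]
  congr 1
  ext p
  simp [eq_comm]

lemma mem_nSpan_iff {f : MvPolynomial (Fin (n + 1)) A} :
    f ∈ nSpan A J ↔ ∀ γ ∈ f.support, γ ∉ J := by
  rw [nSpan_eq_restrictSupport, mem_restrictSupport_iff A]
  rfl

lemma homogeneousComponent_mem_nSpan {f : MvPolynomial (Fin (n + 1)) A} (hf : f ∈ nSpan A J)
    (s : ℕ) : homogeneousComponent s f ∈ nSpan A J := by
  rw [mem_nSpan_iff, support_homogeneousComponent] at *
  exact fun γ hγ => hf γ (Finset.mem_filter.mp hγ).1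

lemma IsMarkedSet.isHomogeneous (hF : IsMarkedSet J F) {α : Mon n} (hα : α ∈ minGens J) :
    (F α).IsHomogeneous (mdeg α) := by
  intro β hβ
  rw [Pi.one_def, ← Finsupp.degree_eq_weight_one]
  rcases eq_or_ne β α with rfl | hne
  · rfl
  · exact ((hF α hα).2 β (mem_support_iff.mpr hβ) hne).2

lemma IsMarkedSet.isHomogeneous_monomial_mul (hF : IsMarkedSet J F) {α : Mon n}
    (hα : α ∈ minGens J) (δ : Mon n) :
    (monomial δ (1 : A) * F α).IsHomogeneous (mdeg α + mdeg δ) := by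
  rw [add_comm (mdeg α)]
  exact (isHomogeneous_monomial 1 rfl).mul (hF.isHomogeneous hα)

lemma restrictScalars_markedIdeal (J : Set (Mon n)) (F : Mon n → MvPolynomial (Fin (n + 1)) A) :
    (markedIdeal J F).restrictScalars A =
      Submodule.span A (Set.range (monomial · (1 : A) : Mon n → _) • F '' minGens J) := by
  refine (Submodule.span_smul_of_span_eq_top ?_ _).symm
  rw [← coe_basisMonomials]
  exact (basisMonomials _ A).span_eq

lemma homogeneousComponent_mem_span_FSet_union_FHatSet (hF : IsMarkedSet J F)
    {f : MvPolynomial (Fin (n + 1)) A} (hf : f ∈ markedIdeal J F) (s : ℕ) :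
    homogeneousComponent s f ∈ Submodule.span A (FSet J F s ∪ FHatSet J F s) := by
  have hf' : f ∈ (markedIdeal J F).restrictScalars A := hf
  rw [restrictScalars_markedIdeal] at hf'
  clear hf
  induction hf' using Submodule.span_induction with
  | mem p hp =>
    obtain ⟨_, ⟨δ, rfl⟩, _, ⟨α, hα, rfl⟩, rfl⟩ := hp
    dsimp only
    rw [homogeneousComponent_of_mem (hF.isHomogeneous_monomial_mul hα δ)]
    split_ifs with h
    · apply Submodule.subset_span
      by_cases hge : minGeMax α δ
      · exact Or.inl ⟨α, δ, hα, h.symm, hge, rfl⟩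
      · exact Or.inr ⟨α, δ, hα, h.symm, hge, rfl⟩
    · exact zero_mem _
  | zero => simp
  | add x y _ _ hx hy => rw [map_add]; exact add_mem hx hy
  | smul a x _ hx => rw [map_smul]; exact Submodule.smul_mem _ a hx

lemma idealDeg_eq_span_FSet_union_FHatSet (hF : IsMarkedSet J F) (s : ℕ) :
    idealDeg A (markedIdeal J F) s = Submodule.span A (FSet J F s ∪ FHatSet J F s) := by
  apply le_antisymm
  · rintro f ⟨hfI, hfs⟩
    simpa [homogeneousComponent_of_mem hfs] using
      homogeneousComponent_mem_span_FSet_union_FHatSet hF hfI s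
  · rw [Submodule.span_le]
    rintro _ (⟨α, δ, hα, rfl, -, rfl⟩ | ⟨α, δ, hα, rfl, -, rfl⟩) <;>
      exact ⟨Ideal.mul_mem_left _ _ (Ideal.subset_span ⟨α, hα, rfl⟩),
        hF.isHomogeneous_monomial_mul hα δ⟩

lemma span_FSet_le_idealDeg (hF : IsMarkedSet J F) (s : ℕ) :
    Submodule.span A (FSet J F s) ≤ idealDeg A (markedIdeal J F) s := by
  rw [idealDeg_eq_span_FSet_union_FHatSet hF]
  exact Submodule.span_mono Set.subset_union_left

lemma span_SFSet_le_span_FSet_union_FHatSet (s : ℕ) :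
    Submodule.span A (SFSet J F s) ≤ Submodule.span A (FSet J F s ∪ FHatSet J F s) := by
  rw [Submodule.span_le]
  rintro _ ⟨α, γ, β, δ, hα, hβ, hβs, hge, hαs, hge', -, rfl⟩
  exact sub_mem (Submodule.subset_span (Or.inr ⟨β, δ, hβ, hβs, hge, rfl⟩))
    (Submodule.subset_span (Or.inl ⟨α, γ, hα, hαs, hge', rfl⟩))

lemma span_FHatSet_le_span_SFSet_sup_span_FSet (hJ : IsStronglyStable J) (s : ℕ) :
    Submodule.span A (FHatSet J F s) ≤
      Submodule.span A (SFSet J F s) ⊔ Submodule.span A (FSet J F s) := by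
  rw [Submodule.span_le]
  rintro _ ⟨β, δ, hβ, hdeg, hge, rfl⟩
  obtain ⟨α, γ, hα, hge', hsum⟩ := hJ.exists_add_eq (hJ.1.mem_of_le hβ.1 le_add_self)
  have hdeg' : mdeg α + mdeg γ = s := by
    rw [← hdeg, add_comm (mdeg α), ← mdeg_add, hsum, mdeg_add, add_comm]
  have hdiff : monomial δ (1 : A) * F β - monomial γ 1 * F α ∈ SFSet J F s :=
    ⟨α, γ, β, δ, hα, hβ, hdeg, hge, hdeg', hge', hsum.symm, rfl⟩
  have hmul : monomial γ (1 : A) * F α ∈ FSet J F s := ⟨α, γ, hα, hdeg', hge', rfl⟩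
  rw [← sub_add_cancel (monomial δ (1 : A) * F β) (monomial γ 1 * F α)]
  exact Submodule.add_mem_sup (Submodule.subset_span (R := A) hdiff)
    (Submodule.subset_span (R := A) hmul)

lemma monomial_mem_span_FSet_sup_nSpan (hJ : IsStronglyStable J) (hF : IsMarkedSet J F)
    (ε : Mon n) : monomial ε (1 : A) ∈ Submodule.span A (FSet J F (mdeg ε)) ⊔ nSpan A J := by
  by_cases hε : ε ∈ J
  swap
  · exact Submodule.mem_sup_right (Submodule.subset_span ⟨ε, hε, rfl⟩)
  obtain ⟨α, δ, hα, hge, rfl⟩ := hJ.exists_add_eq hε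
  clear hε
  induction δ using lexLt_wellFounded.induction generalizing α with
  | _ δ ih =>
  have hmul : monomial δ (1 : A) * F α ∈ FSet J F (mdeg (δ + α)) :=
    ⟨α, δ, hα, by rw [mdeg_add, add_comm], hge, rfl⟩
  refine monomial_mem_of_coeff_eq_one (Submodule.mem_sup_left (Submodule.subset_span hmul))
    (by rw [coeff_monomial_mul, one_mul, (hF α hα).1]) fun ε hε hne => ?_
  rw [mem_support_iff, coeff_monomial_mul', one_mul] at hε
  split_ifs at hε with hle
  · obtain ⟨β, rfl⟩ := exists_add_of_le hle
    rw [add_tsub_cancel_left] at hε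
    obtain ⟨hβJ, hβdeg⟩ := (hF α hα).2 β (mem_support_iff.mpr hε) (by rintro rfl; exact hne rfl)
    rw [mdeg_add, ← hβdeg, ← mdeg_add]
    by_cases hmem : δ + β ∈ J
    · obtain ⟨α', δ', hα', hge', hsum⟩ := hJ.exists_add_eq hmem
      rw [← hsum]
      exact ih δ' (lexLt_of_add_eq hJ.1 hβJ hα'.1 hge' hsum) α' hα' hge'
    · exact Submodule.mem_sup_right (Submodule.subset_span ⟨δ + β, hmem, rfl⟩)
  · exact absurd rfl hε

lemma mem_span_FSet_sup_nSpan_of_isHomogeneous (hJ : IsStronglyStable J) (hF : IsMarkedSet J F)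
    {f : MvPolynomial (Fin (n + 1)) A} {s : ℕ} (hf : f.IsHomogeneous s) :
    f ∈ Submodule.span A (FSet J F s) ⊔ nSpan A J :=
  mem_of_forall_monomial_mem fun ε hε => by
    have hdeg : mdeg ε = s := by
      rw [← hf (mem_support_iff.mp hε), Pi.one_def, ← Finsupp.degree_eq_weight_one]
      rfl
    simpa [hdeg] using monomial_mem_span_FSet_sup_nSpan hJ hF ε

lemma markedIdeal_sup_nSpan_eq_top (hJ : IsStronglyStable J) (hF : IsMarkedSet J F) :
    (markedIdeal J F).restrictScalars A ⊔ nSpan A J = ⊤ :=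
  eq_top_iff.mpr fun _ _ => mem_of_forall_monomial_mem fun ε _ =>
    sup_le_sup_right ((span_FSet_le_idealDeg hF _).trans inf_le_left) _
      (monomial_mem_span_FSet_sup_nSpan hJ hF ε)

lemma FSet_eq_image (J : Set (Mon n)) (F : Mon n → MvPolynomial (Fin (n + 1)) A) (s : ℕ) :
    FSet J F s = (fun q : Mon n × Mon n => monomial q.2 (1 : A) * F q.1) ''
      {q | q.1 ∈ minGens J ∧ mdeg q.1 + mdeg q.2 = s ∧ minGeMax q.1 q.2} := by
  ext p
  constructor
  · rintro ⟨α, δ, hα, hs, hge, rfl⟩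
    exact ⟨(α, δ), ⟨hα, hs, hge⟩, rfl⟩
  · rintro ⟨⟨α, δ⟩, ⟨hα, hs, hge⟩, rfl⟩
    exact ⟨α, δ, hα, hs, hge, rfl⟩

lemma coeff_monomial_mul_eq_zero (hJ : IsMonomialIdeal J) (hF : IsMarkedSet J F)
    {α δ α₀ δ₀ : Mon n} (hα : α ∈ minGens J) (hge : minGeMax α δ) (hα₀ : α₀ ∈ minGens J)
    (hge₀ : minGeMax α₀ δ₀) (hne : (α, δ) ≠ (α₀, δ₀)) (hmax : ¬ lexLt δ₀ δ) :
    (monomial δ (1 : A) * F α).coeff (δ₀ + α₀) = 0 := by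
  rw [coeff_monomial_mul', one_mul]
  split_ifs with hle
  · obtain ⟨β, hβ⟩ := exists_add_of_le hle
    rw [hβ, add_tsub_cancel_left]
    by_contra hc
    rcases eq_or_ne β α with rfl | hβα
    · obtain ⟨rfl, rfl⟩ := eq_of_add_eq_of_mem_minGens hJ hα₀ hα hge₀ hge hβ.symm
      exact hne rfl
    · exact hmax (lexLt_of_add_eq hJ ((hF α hα).2 β (mem_support_iff.mpr hc) hβα).1 hα₀.1 hge₀ hβ)
  · rfl

lemma eq_zero_of_mem_span_FSet_of_mem_nSpan (hJ : IsMonomialIdeal J) (hF : IsMarkedSet J F)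
    {s : ℕ} {g : MvPolynomial (Fin (n + 1)) A} (hg : g ∈ Submodule.span A (FSet J F s))
    (hgN : g ∈ nSpan A J) : g = 0 := by
  classical
  rw [FSet_eq_image, Finsupp.mem_span_image_iff_linearCombination] at hg
  obtain ⟨l, hl, rfl⟩ := hg
  suffices l = 0 by simp [this]
  by_contra hl0
  obtain ⟨q₀, hq₀, hmax⟩ := l.support.exists_max_image (fun q => toColex q.2)
    (Finsupp.support_nonempty_iff.mpr hl0)
  obtain ⟨hα₀, -, hge₀⟩ := hl hq₀
  -- by uniqueness of the decomposition and maximality of `δ₀`, only `q₀` contributes here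
  have hcoeff : (Finsupp.linearCombination A
      (fun q : Mon n × Mon n => monomial q.2 (1 : A) * F q.1) l).coeff (q₀.2 + q₀.1) = l q₀ := by
    rw [Finsupp.linearCombination_apply, Finsupp.sum, coeff_sum, Finset.sum_eq_single q₀]
    · simp [coeff_monomial_mul, (hF _ hα₀).1]
    · intro q hq hne
      obtain ⟨hα, -, hge⟩ := hl hq
      rw [coeff_smul, coeff_monomial_mul_eq_zero hJ hF hα hge hα₀ hge₀ hne
        (by rw [lexLt_iff_toColex_lt, not_lt]; exact hmax q hq), smul_zero]
    · exact fun h => absurd hq₀ h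
  apply Finsupp.mem_support_iff.mp hq₀
  rw [← hcoeff]
  by_contra h
  exact mem_nSpan_iff.mp hgN _ (mem_support_iff.mpr h) (hJ.mem_of_le hα₀.1 le_add_self)

end Polynomials

end MarkedFamilies

open MarkedFamilies in
theorem stmt_7_general {n : ℕ} {A : Type*} [CommRing A]
    (J : Set (Mon n)) (hJ : IsStronglyStable J)
    (F : Mon n → MvPolynomial (Fin (n + 1)) A) (hF : IsMarkedSet J F) :
    List.TFAE
      [IsMarkedBasis J F,
       ∀ s : ℕ, idealDeg A (markedIdeal J F) s = Submodule.span A (FSet J F s),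
       ∀ s : ℕ, Submodule.span A (SFSet J F s) ≤ Submodule.span A (FSet J F s),
       Submodule.restrictScalars A (markedIdeal J F) ⊓ nSpan A J = ⊥] := by
  tfae_have 1 → 4 := fun h => disjoint_iff.mp h.2.disjoint
  tfae_have 4 → 1 := fun h =>
    ⟨hF, disjoint_iff.mpr h, codisjoint_iff.mpr (markedIdeal_sup_nSpan_eq_top hJ hF)⟩
  tfae_have 2 → 3 := fun h s => by
    rw [← h s, idealDeg_eq_span_FSet_union_FHatSet hF]
    exact span_SFSet_le_span_FSet_union_FHatSet s
  tfae_have 3 → 2 := fun h s => by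
    refine le_antisymm ?_ (span_FSet_le_idealDeg hF s)
    rw [idealDeg_eq_span_FSet_union_FHatSet hF, Submodule.span_union]
    exact sup_le le_rfl
      ((span_FHatSet_le_span_SFSet_sup_span_FSet hJ s).trans (sup_le (h s) le_rfl))
  tfae_have 4 → 2 := fun h s => by
    refine le_antisymm (fun f hf => ?_) (span_FSet_le_idealDeg hF s)
    obtain ⟨g, hg, r, hr, rfl⟩ :=
      Submodule.mem_sup.mp (mem_span_FSet_sup_nSpan_of_isHomogeneous hJ hF hf.2)
    have hrI : r ∈ (markedIdeal J F).restrictScalars A := by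
      simpa using sub_mem hf.1 (span_FSet_le_idealDeg hF s hg).1
    have hr0 : r ∈ (⊥ : Submodule A _) := h ▸ Submodule.mem_inf.mpr ⟨hrI, hr⟩
    rwa [(Submodule.mem_bot A).mp hr0, add_zero]
  tfae_have 2 → 4 := fun h => by
    refine eq_bot_iff.mpr fun f hf => (Submodule.mem_bot A).mpr ?_
    rw [← sum_homogeneousComponent f]
    refine Finset.sum_eq_zero fun s _ => eq_zero_of_mem_span_FSet_of_mem_nSpan (s := s) hJ.1 hF ?_
      (homogeneousComponent_mem_nSpan hf.2 s)
    rw [← h s, idealDeg_eq_span_FSet_union_FHatSet hF]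
    exact homogeneousComponent_mem_span_FSet_union_FHatSet hF hf.1 s
  tfae_finish

open MarkedFamilies in
/-- characterizations of `J`-marked bases. -/
theorem stmt_7 {n : ℕ} {A : Type*} [CommRing A] [IsNoetherianRing A]
    (J : Set (Mon n)) (hJ : IsStronglyStable J)
    (F : Mon n → MvPolynomial (Fin (n + 1)) A) (hF : IsMarkedSet J F) :
    List.TFAE
      [IsMarkedBasis J F,
       ∀ s : ℕ, idealDeg A (markedIdeal J F) s = Submodule.span A (FSet J F s),
       ∀ s : ℕ, Submodule.span A (SFSet J F s) ≤ Submodule.span A (FSet J F s),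
       Submodule.restrictScalars A (markedIdeal J F) ⊓ nSpan A J = ⊥] :=
  stmt_7_general J hJ F hF
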